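/- arXiv:1711.10146 — 3 statements merged into one kernel-verified Lean document; each statement's English description precedes it below -/
import Mathlib

section
/- Let f : R^d × R^d × R^d → R be an affine function, i.e., f(x,y,z) = W1·x + W2·y + W3·z + c for fixed vectors W1,W2,W3 and constant c. Then there do not exist vectors Y01,Y11,Y02,Y12,Y03,Y13 in R^d and thresholds l > s with f(Y01,Y02,Y03) > l, f(Y11,Y02,Y03) < s, f(Y11,Y12,Y13) > l, and f(Y01,Y12,Y13) < s. -/
open Matrix

theorem no_affine_tuplewise_similarity (d : ℕ)
    (W1 W2 W3 : Fin d → ℝ) (c : ℝ) (f : (Fin d → ℝ) → (Fin d → ℝ) → (Fin d → ℝ) → ℝ)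
    (hf : ∀ x y z, f x y z = W1 ⬝ᵥ x + W2 ⬝ᵥ y + W3 ⬝ᵥ z + c) :
    ¬ ∃ (Y01 Y11 Y02 Y12 Y03 Y13 : Fin d → ℝ) (l s : ℝ),
      l > s ∧
      f Y01 Y02 Y03 > l ∧
      f Y11 Y02 Y03 < s ∧
      f Y11 Y12 Y13 > l ∧
      f Y01 Y12 Y13 < s := by
  rintro ⟨Y01, Y11, Y02, Y12, Y03, Y13, l, s, hls, h1, h2, h3, h4⟩
  simp only [hf] at h1 h2 h3 h4
  linarith
end

section
/- Fix N ≥ 2 and vectors W1,…,WN in R^d, and define S(X1,…,XN) = Σ_i Wi·Xi. Suppose for each type i ∈ {1,…,N} there are two embeddings Yi0, Yi1 in R^d, and suppose there exist thresholds l > s such that S(Y1^{c},…,YN^{c}) > l for c ∈ {0,1} (both all-zero and all-one cluster triples are hyperedges) while S(Y1^{1}, Y2^{0},…,YN^{0}) < s and S(Y1^{0}, Y2^{1},…,YN^{1}) < s. Then we reach a contradiction; i.e., no such configuration exists. -/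
open Matrix

theorem no_linear_N_tuplewise_similarity (N d : ℕ) (hN : 2 ≤ N)
    (W : Fin N → (Fin d → ℝ))
    (S : (Fin N → (Fin d → ℝ)) → ℝ)
    (hS : ∀ X, S X = ∑ i, (W i) ⬝ᵥ (X i))
    (Y : Fin N → Fin 2 → (Fin d → ℝ)) (l s : ℝ) (hls : l > s)
    (hpure : ∀ c : Fin 2, S (fun i => Y i c) > l)
    (hmix0 : S (fun i => if i.val = 0 then Y i 1 else Y i 0) < s)
    (hmix1 : S (fun i => if i.val = 0 then Y i 0 else Y i 1) < s) :
    False := by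
  have h0 := hpure 0
  have h1 := hpure 1
  rw [hS] at h0 h1 hmix0 hmix1
  have key : (∑ i, W i ⬝ᵥ Y i 0) + ∑ i, W i ⬝ᵥ Y i 1
      = (∑ i, W i ⬝ᵥ (if i.val = 0 then Y i 1 else Y i 0))
        + ∑ i, W i ⬝ᵥ (if i.val = 0 then Y i 0 else Y i 1) := by
    rw [← Finset.sum_add_distrib, ← Finset.sum_add_distrib]
    apply Finset.sum_congr rfl
    intro i _
    split <;> ring
  linarith
end

section
/- Let f : R^d × R^d × R^d → R be linear in each argument jointly (i.e., f(x,y,z) = W1·x + W2·y + W3·z). If f satisfies Property 1 with thresholds l > s for a hypergraph containing hyperedges (a1,a2,a3) and (b1,b2,b3) but not (b1,a2,a3) nor (a1,b2,b3), then W1·(a1 − b1) > l − s and W1·(b1 − a1) > l − s, hence 0 > 2(l−s) > 0, a contradiction. -/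
open Matrix

theorem linear_similarity_property1_contradiction (d : ℕ)
    (W1 W2 W3 : Fin d → ℝ)
    (f : (Fin d → ℝ) → (Fin d → ℝ) → (Fin d → ℝ) → ℝ)
    (hf : ∀ x y z, f x y z = W1 ⬝ᵥ x + W2 ⬝ᵥ y + W3 ⬝ᵥ z)
    (l s : ℝ) (hls : l > s)
    (a1 a2 a3 b1 b2 b3 : Fin d → ℝ)
    (ha : f a1 a2 a3 > l) (hb : f b1 b2 b3 > l)
    (hba : f b1 a2 a3 < s) (hab : f a1 b2 b3 < s) :
    W1 ⬝ᵥ (a1 - b1) > l - s ∧ W1 ⬝ᵥ (b1 - a1) > l - s ∧ False := by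
  simp only [hf] at ha hb hba hab
  have h1 : W1 ⬝ᵥ (a1 - b1) > l - s := by
    rw [dotProduct_sub]; linarith
  have h2 : W1 ⬝ᵥ (b1 - a1) > l - s := by
    rw [dotProduct_sub]; linarith
  rw [dotProduct_sub] at h1 h2
  exact ⟨by rw [dotProduct_sub]; linarith, by rw [dotProduct_sub]; linarith, by linarith⟩
end
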